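/- The function Θ(x) = log Γ(x+1) − x·log x + x − (1/2)·log(2π) − (1/4)·log(x² + x/3 + 1/18) is strictly increasing on (0, ∞), with limit 0 as x → ∞. -/

import Mathlib

/-!
Write `Θ t - Θ (t + 1) = Θstep t` with `Θstep` elementary. Its derivative is
`log (1 + 1/t) - 1/(t + 1) + (rational terms)`, and replacing the logarithm by the first three
terms of its `artanh` series (all positive) leaves a rational function with positive coefficients,
so `Θstep` is strictly increasing. Since `Θ` tends to `0`, the differences `Θ (y + n) - Θ (x + n)`
for `x < y` decrease strictly in `n` towards `0`, hence `Θ y - Θ x > 0`.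

For the limit, `Θ` differs from Binet's function by a term tending to `0`; Binet's function tends
to `0` along the integers by Stirling's formula, and log-convexity of `Γ` controls it between
consecutive integers.
-/

open Filter

noncomputable def Θ (x : ℝ) : ℝ :=
  Real.log (Real.Gamma (x + 1)) - x * Real.log x + x
    - (1/2) * Real.log (2 * Real.pi) - (1/4) * Real.log (x^2 + x/3 + 1/18)

open Real Set Topology
open scoped Nat

lemma strictMonoOn_Ioi_of_tendsto_of_strictMonoOn_sub_add_one {F : ℝ → ℝ} {a c : ℝ}
    (hF : Tendsto F atTop (𝓝 c)) (hstep : StrictMonoOn (fun t ↦ F t - F (t + 1)) (Ioi a)) :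
    StrictMonoOn F (Ioi a) := by
  intro x (hx : a < x) y (hy : a < y) hxy
  set D : ℕ → ℝ := fun n ↦ F (y + n) - F (x + n) with hD
  have hD_anti : StrictAnti D := strictAnti_nat_of_succ_lt fun n ↦ by
    have hn : (0 : ℝ) ≤ n := n.cast_nonneg
    have := hstep (a := x + n) (b := y + n) (show a < x + n by linarith)
      (show a < y + n by linarith) (by linarith)
    simp only [hD, Nat.cast_succ, ← add_assoc] at this ⊢
    linarith
  have hD_lim : Tendsto D atTop (𝓝 0) := by
    have hshift (z : ℝ) : Tendsto (fun n : ℕ ↦ z + n) atTop atTop :=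
      tendsto_atTop_add_const_left _ z tendsto_natCast_atTop_atTop
    simpa using (hF.comp (hshift y)).sub (hF.comp (hshift x))
  have h₀₁ : D 1 < D 0 := hD_anti zero_lt_one
  have h₁ : 0 ≤ D 1 := hD_anti.antitone.le_of_tendsto hD_lim 1
  simp only [hD, Nat.cast_zero, add_zero] at h₀₁ h₁
  linarith

lemma two_mul_add_le_log_one_add_inv {t : ℝ} (ht : 0 < t) :
    2 * ((2 * t + 1)⁻¹ + (2 * t + 1)⁻¹ ^ 3 / 3 + (2 * t + 1)⁻¹ ^ 5 / 5) ≤ log (1 + t⁻¹) := by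
  have := sum_le_hasSum (Finset.range 3) (fun k _ ↦ by positivity) (hasSum_log_one_add_inv ht)
  simp only [Finset.sum_range_succ, Finset.sum_range_zero] at this
  norm_num at this
  rw [inv_pow, inv_pow]
  linarith

noncomputable def Θstep (t : ℝ) : ℝ :=
  t * log (1 + t⁻¹) - 1
    + 1 / 4 * (log ((t + 1) ^ 2 + (t + 1) / 3 + 1 / 18) - log (t ^ 2 + t / 3 + 1 / 18))

lemma Θ_sub_Θ_add_one {t : ℝ} (ht : 0 < t) : Θ t - Θ (t + 1) = Θstep t := by
  have hlog : log (1 + t⁻¹) = log (t + 1) - log t := by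
    rw [← log_div (by positivity) ht.ne', add_div, div_self ht.ne', one_div]
  rw [Θ, Θ, Θstep, Real.Gamma_add_one (s := t + 1) (by positivity),
    log_mul (by positivity) (Real.Gamma_pos_of_pos (by positivity)).ne', hlog]
  ring

lemma hasDerivAt_Θstep {t : ℝ} (ht : 0 < t) :
    HasDerivAt Θstep (log (1 + t⁻¹) - (t + 1)⁻¹
      + 1 / 4 * ((2 * (t + 1) + 1 / 3) / ((t + 1) ^ 2 + (t + 1) / 3 + 1 / 18)
        - (2 * t + 1 / 3) / (t ^ 2 + t / 3 + 1 / 18))) t := by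
  have hq {u : ℝ} (hu : 0 < u) : HasDerivAt (fun t ↦ log (t ^ 2 + t / 3 + 1 / 18))
      ((2 * u + 1 / 3) / (u ^ 2 + u / 3 + 1 / 18)) u := by
    refine ((((hasDerivAt_pow 2 u).fun_add ((hasDerivAt_id u).div_const 3)).add_const
      (1 / 18)).log (by positivity)).congr_deriv ?_
    simp
  have hinv : HasDerivAt (fun t ↦ log (1 + t⁻¹)) (-(t ^ 2)⁻¹ / (1 + t⁻¹)) t :=
    ((hasDerivAt_inv ht.ne').const_add 1).log (by positivity)
  have hq1 := (hq (by positivity : 0 < t + 1)).comp_add_const t 1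
  refine ((((hasDerivAt_id t).fun_mul hinv).sub_const 1).fun_add
    ((hq1.fun_sub (hq ht)).const_mul (1 / 4))).congr_deriv ?_
  simp only [id]
  field_simp
  ring

lemma deriv_Θstep_pos {t : ℝ} (ht : 0 < t) : 0 < deriv Θstep t := by
  rw [(hasDerivAt_Θstep ht).deriv]
  suffices 0 < 2 * ((2 * t + 1)⁻¹ + (2 * t + 1)⁻¹ ^ 3 / 3 + (2 * t + 1)⁻¹ ^ 5 / 5) - (t + 1)⁻¹
      + 1 / 4 * ((2 * (t + 1) + 1 / 3) / ((t + 1) ^ 2 + (t + 1) / 3 + 1 / 18)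
        - (2 * t + 1 / 3) / (t ^ 2 + t / 3 + 1 / 18)) by
    linarith [two_mul_add_le_log_one_add_inv ht]
  field_simp
  ring_nf
  positivity

lemma strictMonoOn_Θstep : StrictMonoOn Θstep (Ioi 0) :=
  strictMonoOn_of_deriv_pos (convex_Ioi 0)
    (fun _ ht ↦ (hasDerivAt_Θstep ht).continuousAt.continuousWithinAt)
    (fun _ ht ↦ deriv_Θstep_pos (by rwa [interior_Ioi] at ht))

-- Binet's function `log Γ(x) - (x - 1/2) log x + x - log (2π) / 2`, written through `Γ(x + 1)`.
noncomputable def binet (x : ℝ) : ℝ :=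
  log (Gamma (x + 1)) - (x + 1 / 2) * log x + x - 1 / 2 * log (2 * π)

lemma Θ_eq_binet_sub {x : ℝ} (hx : 0 < x) :
    Θ x = binet x - 1 / 4 * log (1 + x⁻¹ / 3 + x⁻¹ ^ 2 / 18) := by
  have hsplit : x ^ 2 + x / 3 + 1 / 18 = x ^ 2 * (1 + x⁻¹ / 3 + x⁻¹ ^ 2 / 18) := by
    field_simp
  rw [Θ, binet, hsplit, log_mul (x := x ^ 2) (by positivity) (by positivity), log_pow]
  push_cast
  ring

lemma binet_natCast {n : ℕ} (hn : n ≠ 0) :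
    binet n = log (Stirling.stirlingSeq n) - log √π := by
  have hn' : (n : ℝ) ≠ 0 := Nat.cast_ne_zero.mpr hn
  rw [binet, Stirling.log_stirlingSeq_formula, Real.Gamma_nat_eq_factorial,
    log_mul two_ne_zero hn', log_div hn' (exp_ne_zero 1), log_exp,
    log_mul two_ne_zero pi_ne_zero, log_sqrt pi_pos.le]
  ring

lemma tendsto_binet_natCast : Tendsto (fun n : ℕ ↦ binet n) atTop (𝓝 0) := by
  have h := ((continuousAt_log (sqrt_pos.mpr pi_pos).ne').tendsto.comp
    Stirling.tendsto_stirlingSeq_sqrt_pi).sub_const (log √π)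
  rw [sub_self] at h
  refine h.congr' ?_
  filter_upwards [eventually_ne_atTop 0] with n hn
  exact (binet_natCast hn).symm

lemma log_Gamma_add_one_mem_Icc {n : ℕ} (hn : n ≠ 0) {x : ℝ} (hnx : n ≤ x) (hxn : x ≤ n + 1) :
    log (n ! : ℝ) + (x - n) * log n ≤ log (Gamma (x + 1)) ∧
      log (Gamma (x + 1)) ≤ log (n ! : ℝ) + (x - n) * log (n + 1) := by
  rcases hnx.eq_or_lt with rfl | hlt
  · simp [Real.Gamma_nat_eq_factorial]
  have hf_feq : ∀ {y : ℝ}, 0 < y → (log ∘ Gamma) (y + 1) = (log ∘ Gamma) y + log y :=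
    fun {y} hy ↦ by
      rw [Function.comp_apply, Function.comp_apply, Real.Gamma_add_one hy.ne',
        log_mul hy.ne' (Real.Gamma_pos_of_pos hy).ne', add_comm]
  have hs : 0 < x - n := sub_pos.mpr hlt
  have hge := BohrMollerup.f_add_nat_ge convexOn_log_Gamma hf_feq
    (Nat.succ_le_succ (Nat.one_le_iff_ne_zero.mpr hn)) hs
  have hle := BohrMollerup.f_add_nat_le convexOn_log_Gamma hf_feq n.succ_ne_zero hs
    (by linarith)
  simp only [Function.comp_apply, Nat.cast_succ, Real.Gamma_nat_eq_factorial,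
    add_sub_cancel_right] at hge hle
  rw [show (n : ℝ) + 1 + (x - n) = x + 1 by ring] at hge hle
  exact ⟨hge, hle⟩

lemma add_half_mul_log_sub_log_sub_mem_Icc {a x : ℝ} (ha : 0 < a) (hax : a ≤ x)
    (hxa : x ≤ a + 1) : (x + 1 / 2) * (log x - log a) - (x - a) ∈ Icc 0 (3 / 2 / a) := by
  have hx : 0 < x := ha.trans_le hax
  have hlog_lo : (x - a) / x ≤ log x - log a := by
    have := one_sub_inv_le_log_of_pos (show 0 < x / a by positivity)
    rw [log_div hx.ne' ha.ne', inv_div, one_sub_div hx.ne'] at this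
    linarith
  have hlog_hi : log x - log a ≤ (x - a) / a := by
    have := log_le_sub_one_of_pos (show 0 < x / a by positivity)
    rw [log_div hx.ne' ha.ne', div_sub_one ha.ne'] at this
    linarith
  constructor
  · calc (0 : ℝ) ≤ (x - a) / (2 * x) := by positivity
      _ = (x + 1 / 2) * ((x - a) / x) - (x - a) := by field_simp; ring
      _ ≤ _ := by gcongr
  · calc _ ≤ (x + 1 / 2) * ((x - a) / a) - (x - a) := by gcongr
      _ = (x - a) * (x - a + 1 / 2) / a := by field_simp; ring
      _ ≤ 1 * (1 + 1 / 2) / a := by gcongr <;> linarith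
      _ = 3 / 2 / a := by norm_num

lemma abs_binet_sub_binet_natCast_le {n : ℕ} (hn : n ≠ 0) {x : ℝ} (hnx : n ≤ x)
    (hxn : x ≤ n + 1) : |binet x - binet n| ≤ 2 / n := by
  have hn0 : (0 : ℝ) < n := Nat.cast_pos.mpr (Nat.pos_of_ne_zero hn)
  obtain ⟨hΓlo, hΓhi⟩ := log_Gamma_add_one_mem_Icc hn hnx hxn
  have hlog_succ : log (n + 1) - log n ≤ 1 / n := by
    have := log_le_sub_one_of_pos (show 0 < (n + 1 : ℝ) / n by positivity)
    rw [log_div (by positivity) hn0.ne', add_div, div_self hn0.ne'] at this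
    linarith
  have hΓ : log (Gamma (x + 1)) - log (n ! : ℝ) - (x - n) * log n ≤ 1 / n :=
    calc _ ≤ (x - n) * (log (n + 1) - log n) := by linarith
      _ ≤ 1 * (1 / n) := mul_le_mul (by linarith) hlog_succ
          (sub_nonneg.mpr (log_le_log hn0 (by linarith))) zero_le_one
      _ = 1 / n := one_mul _
  obtain ⟨hlo, hhi⟩ := add_half_mul_log_sub_log_sub_mem_Icc hn0 hnx hxn
  have hdiff : binet x - binet n = (log (Gamma (x + 1)) - log (n ! : ℝ) - (x - n) * log n)
      - ((x + 1 / 2) * (log x - log n) - (x - n)) := by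
    rw [binet, binet, Real.Gamma_nat_eq_factorial]
    ring
  have h₁ : 1 / (n : ℝ) ≤ 2 / n := by gcongr; norm_num
  have h₂ : 3 / 2 / (n : ℝ) ≤ 2 / n := by gcongr; norm_num
  rw [hdiff, abs_le]
  constructor <;> linarith

lemma tendsto_binet_atTop : Tendsto binet atTop (𝓝 0) := by
  have hfloor := tendsto_binet_natCast.comp (tendsto_nat_floor_atTop (α := ℝ))
  have hgap : Tendsto (fun x ↦ binet x - binet ⌊x⌋₊) atTop (𝓝 0) := by
    refine squeeze_zero_norm' ?_
      ((tendsto_const_div_atTop_nhds_zero_nat 2).comp tendsto_nat_floor_atTop)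
    filter_upwards [eventually_ge_atTop 1] with x hx
    have hfl : ⌊x⌋₊ ≠ 0 := (Nat.floor_pos.mpr hx).ne'
    exact abs_binet_sub_binet_natCast_le hfl (Nat.floor_le (by linarith))
      (Nat.lt_floor_add_one x).le
  simpa using hfloor.add hgap

lemma tendsto_Θ_atTop : Tendsto Θ atTop (𝓝 0) := by
  have hpoly : Tendsto (fun x : ℝ ↦ 1 + x⁻¹ / 3 + x⁻¹ ^ 2 / 18) atTop
      (𝓝 (1 + 0 / 3 + 0 ^ 2 / 18)) :=
    ((tendsto_inv_atTop_zero.div_const 3).const_add 1).add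
      ((tendsto_inv_atTop_zero.pow 2).div_const 18)
  have hlim := tendsto_binet_atTop.sub ((hpoly.log (by norm_num)).const_mul (1 / 4))
  rw [zero_div, zero_pow two_ne_zero, zero_div, add_zero, add_zero, log_one, mul_zero,
    sub_zero] at hlim
  refine hlim.congr' ?_
  filter_upwards [eventually_gt_atTop 0] with x hx
  rw [Θ_eq_binet_sub hx]

theorem stmt_15 :
    StrictMonoOn Θ (Set.Ioi 0) ∧ Tendsto Θ atTop (nhds 0) :=
  ⟨strictMonoOn_Ioi_of_tendsto_of_strictMonoOn_sub_add_one tendsto_Θ_atTop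
      (strictMonoOn_Θstep.congr fun _ ht ↦ (Θ_sub_Θ_add_one ht).symm),
    tendsto_Θ_atTop⟩
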